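/- arXiv:2012.09045 — 2 statements merged into one kernel-verified Lean document; each statement's English description precedes it below -/
import Mathlib

section
/- Let X ≥ 1 and s = σ+it with σ > θ. Then |ζ_X(s)| ≤ ζ_X(σ), and moreover: if θ < σ < 1 then ζ_X(σ) ≤ min( κ·X^{1−σ}/(1−σ) + A/(σ−θ), κ·X^{1−σ}·log X + A/(σ−θ) ); if σ = 1 then ζ_X(1) ≤ κ·log X + A/(1−θ); and if σ > 1 then ζ_X(σ) ≤ min( σ(A+κ)/(σ−1), κ·log X + σ·A/(σ−θ) ). -/
open MeasureTheory Complex Filter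

/-- The norm of an element `g` of the free arithmetical semigroup `ι →₀ ℕ`,
given the norms `q i > 1` of the generators (Beurling primes). -/
noncomputable def gnorm {ι : Type*} (q : ι → ℝ) (g : ι →₀ ℕ) : ℝ :=
  g.prod fun i k => q i ^ k

/-- The counting function `N(x) = #{g : |g| ≤ x}`. -/
noncomputable def Ncount {ι : Type*} (q : ι → ℝ) (x : ℝ) : ℕ :=
  Nat.card {g : ι →₀ ℕ // gnorm q g ≤ x}

/-- The partial zeta function `ζ_X(s) = Σ_{|g| ≤ X} |g|^{-s}` (a finite sum
under the discreteness assumption). -/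
noncomputable def zetaX {ι : Type*} (q : ι → ℝ) (X : ℝ) (s : ℂ) : ℂ :=
  ∑ᶠ g ∈ {g : ι →₀ ℕ | gnorm q g ≤ X}, (gnorm q g : ℂ) ^ (-s)

/-- The real-valued partial zeta function at a real argument `σ`:
`ζ_X(σ) = Σ_{|g| ≤ X} |g|^{-σ}`. -/
noncomputable def zetaXR {ι : Type*} (q : ι → ℝ) (X : ℝ) (σ : ℝ) : ℝ :=
  ∑ᶠ g ∈ {g : ι →₀ ℕ | gnorm q g ≤ X}, (gnorm q g) ^ (-σ)

/-! Partial summation writes `ζ_X(σ)` as `N(X) X^{-σ} + σ ∫_1^X N(u) u^{-σ-1} du`. Replacing `N` by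
its Axiom A majorant `κ (u - 1) + A u^θ` and integrating back by parts gives
`ζ_X(σ) ≤ κ ∫_1^X u^{-σ} du + σ A / (σ - θ)`, and the stated bounds are elementary estimates of
`∫_1^X u^{-σ} du` in the three ranges of `σ`. The bound on `|ζ_X(s)|` is the triangle inequality. -/

open intervalIntegral
open scoped Finset

section AbelSummation

variable {α : Type*} (T : Finset α) (w : α → ℝ) {a b : ℝ} {f f' B B' : ℝ → ℝ}

theorem IntervalIntegrable.indicator {μ : MeasureTheory.Measure ℝ}
    (hf : IntervalIntegrable f μ a b) {s : Set ℝ} (hs : MeasurableSet s) :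
    IntervalIntegrable (s.indicator f) μ a b :=
  intervalIntegrable_iff.mpr ((intervalIntegrable_iff.mp hf).indicator hs)

theorem Finset.mul_card_filter_lt_eq_sum_indicator (u : ℝ) :
    f' u * #{x ∈ T | w x < u} = ∑ x ∈ T, (Set.Ioi (w x)).indicator f' u := by
  rw [Finset.card_filter, Nat.cast_sum, Finset.mul_sum]
  refine Finset.sum_congr rfl fun x _ => ?_
  by_cases h : w x < u <;> simp [h]

theorem Finset.intervalIntegrable_mul_card_filter_lt (hf' : IntervalIntegrable f' volume a b) :
    IntervalIntegrable (fun u => f' u * #{x ∈ T | w x < u}) volume a b := by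
  simp_rw [Finset.mul_card_filter_lt_eq_sum_indicator]
  have := IntervalIntegrable.sum T fun x _ => hf'.indicator (measurableSet_Ioi (a := w x))
  rwa [Finset.sum_fn] at this

-- The counting function `#{x | w x < u}` is the left-continuous one; it differs from
-- `#{x | w x ≤ u}` only at the finitely many points `w x`.
theorem Finset.sum_comp_eq_card_mul_sub_integral (hw : ∀ x ∈ T, w x ∈ Set.Icc a b)
    (hf : ∀ u ∈ Set.Icc a b, HasDerivAt f (f' u) u) (hf' : IntervalIntegrable f' volume a b) :
    ∑ x ∈ T, f (w x) = #T * f b - ∫ u in a..b, f' u * #{x ∈ T | w x < u} := by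
  have hsingle : ∀ x ∈ T, f (w x) = f b - ∫ u in a..b, (Set.Ioi (w x)).indicator f' u := by
    intro x hx
    obtain ⟨hax, hxb⟩ := hw x hx
    have hsub : Set.uIcc (w x) b ⊆ Set.uIcc a b :=
      Set.uIcc_subset_uIcc_right (Set.mem_uIcc_of_le hax hxb)
    rw [integral_of_le (hax.trans hxb), setIntegral_indicator measurableSet_Ioi, Set.Ioc_inter_Ioi,
      max_eq_right hax, ← integral_of_le hxb,
      integral_eq_sub_of_hasDerivAt
        (fun u hu => hf u (Set.uIcc_of_le (hax.trans hxb) ▸ hsub hu)) (hf'.mono_set hsub)]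
    ring
  simp_rw [Finset.mul_card_filter_lt_eq_sum_indicator,
    integral_finsetSum fun x _ => hf'.indicator measurableSet_Ioi]
  rw [Finset.sum_congr rfl hsingle, Finset.sum_sub_distrib, Finset.sum_const, nsmul_eq_mul]

-- Abel summation, then integration by parts against the majorant `B`.
theorem Finset.sum_comp_le_of_card_filter_le (hab : a ≤ b) (hw : ∀ x ∈ T, w x ∈ Set.Icc a b)
    (hf : ∀ u ∈ Set.Icc a b, HasDerivAt f (f' u) u) (hf' : IntervalIntegrable f' volume a b)
    (hf'_nonpos : ∀ u ∈ Set.Icc a b, f' u ≤ 0) (hfb : 0 ≤ f b)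
    (hB : ∀ u ∈ Set.Icc a b, HasDerivAt B (B' u) u) (hB' : IntervalIntegrable B' volume a b)
    (hcount : ∀ u ∈ Set.Icc a b, (#{x ∈ T | w x ≤ u} : ℝ) ≤ B u) :
    ∑ x ∈ T, f (w x) ≤ B a * f a + ∫ u in a..b, B' u * f u := by
  have hcard : (#T : ℝ) ≤ B b := by
    simpa [Finset.filter_true_of_mem fun x hx => (hw x hx).2] using hcount b ⟨hab, le_rfl⟩
  have hcount_lt : ∀ u ∈ Set.Icc a b, (#{x ∈ T | w x < u} : ℝ) ≤ B u := fun u hu =>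
    (Nat.cast_le.mpr (Finset.card_le_card (Finset.monotone_filter_right T
      fun x _ (h : w x < u) => h.le))).trans (hcount u hu)
  rw [← Set.uIcc_of_le hab] at hf hB
  have hBcont : ContinuousOn B (Set.uIcc a b) := fun u hu =>
    (hB u hu).continuousAt.continuousWithinAt
  have hmono : ∫ u in a..b, f' u * B u ≤ ∫ u in a..b, f' u * #{x ∈ T | w x < u} :=
    integral_mono_on hab (hf'.mul_continuousOn hBcont)
      (T.intervalIntegrable_mul_card_filter_lt w hf') fun u hu =>
        mul_le_mul_of_nonpos_left (hcount_lt u hu) (hf'_nonpos u hu)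
  have hparts := integral_mul_deriv_eq_deriv_mul hB hf hB' hf'
  simp only [mul_comm (B _) (f' _)] at hparts
  rw [T.sum_comp_eq_card_mul_sub_integral w hw (Set.uIcc_of_le hab ▸ hf) hf']
  linarith [mul_le_mul_of_nonneg_right hcard hfb]

end AbelSummation

section PowerIntegrals

variable {σ : ℝ}

theorem integral_rpow_neg_le_of_lt_one (hσ : σ < 1) (X : ℝ) :
    ∫ u in (1 : ℝ)..X, u ^ (-σ) ≤ X ^ (1 - σ) / (1 - σ) := by
  rw [integral_rpow (Or.inl (by linarith)), Real.one_rpow, neg_add_eq_sub]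
  gcongr
  linarith

theorem integral_rpow_neg_le_of_one_lt (hσ : 1 < σ) {X : ℝ} (hX : 1 ≤ X) :
    ∫ u in (1 : ℝ)..X, u ^ (-σ) ≤ 1 / (σ - 1) := by
  rw [integral_rpow (Or.inr ⟨by linarith, Set.notMem_uIcc_of_lt one_pos (by linarith)⟩),
    Real.one_rpow, neg_add_eq_sub, ← neg_div_neg_eq, neg_sub, neg_sub]
  gcongr
  linarith [Real.rpow_nonneg (zero_le_one.trans hX) (1 - σ)]

theorem integral_rpow_neg_le_log (hσ : 1 ≤ σ) {X : ℝ} (hX : 1 ≤ X) :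
    ∫ u in (1 : ℝ)..X, u ^ (-σ) ≤ Real.log X := by
  have h0 : (0 : ℝ) ∉ Set.uIcc 1 X := Set.notMem_uIcc_of_lt one_pos (by linarith)
  calc ∫ u in (1 : ℝ)..X, u ^ (-σ)
      ≤ ∫ u in (1 : ℝ)..X, u ^ (-1 : ℝ) :=
        integral_mono_on hX (intervalIntegrable_rpow (Or.inr h0))
          (intervalIntegrable_rpow (Or.inr h0)) fun u hu =>
            Real.rpow_le_rpow_of_exponent_le hu.1 (neg_le_neg hσ)
    _ = Real.log X := by simp_rw [Real.rpow_neg_one]; rw [integral_inv h0, div_one]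

theorem integral_rpow_neg_le_rpow_mul_log (hσ : σ ≤ 1) {X : ℝ} (hX : 1 ≤ X) :
    ∫ u in (1 : ℝ)..X, u ^ (-σ) ≤ X ^ (1 - σ) * Real.log X := by
  have h0 : (0 : ℝ) ∉ Set.uIcc 1 X := Set.notMem_uIcc_of_lt one_pos (by linarith)
  calc ∫ u in (1 : ℝ)..X, u ^ (-σ)
      ≤ ∫ u in (1 : ℝ)..X, X ^ (1 - σ) * u⁻¹ :=
        integral_mono_on hX (intervalIntegrable_rpow (Or.inr h0))
          ((intervalIntegrable_inv_iff.mpr (Or.inr h0)).const_mul _) fun u hu => by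
            have hu0 : 0 < u := one_pos.trans_le hu.1
            rw [show -σ = (1 - σ) + -1 by ring, Real.rpow_add hu0, Real.rpow_neg_one]
            gcongr
            exact hu.2
    _ = X ^ (1 - σ) * Real.log X := by
      rw [intervalIntegral.integral_const_mul, integral_inv h0, div_one]

end PowerIntegrals

section Beurling

variable {ι : Type*} {q : ι → ℝ} {X : ℝ}

theorem one_le_gnorm (hq : ∀ i, 1 < q i) (g : ι →₀ ℕ) : 1 ≤ gnorm q g :=
  Finset.one_le_prod fun i _ => one_le_pow₀ (hq i).le

theorem Ncount_eq_card_toFinset {x : ℝ} (hfin : {g : ι →₀ ℕ | gnorm q g ≤ x}.Finite) :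
    Ncount q x = #hfin.toFinset :=
  Nat.card_eq_card_finite_toFinset hfin

theorem norm_zetaX_le_zetaXR (hq : ∀ i, 1 < q i) (hfin : {g : ι →₀ ℕ | gnorm q g ≤ X}.Finite)
    (s : ℂ) : ‖zetaX q X s‖ ≤ zetaXR q X s.re := by
  rw [zetaX, zetaXR, finsum_mem_eq_finite_toFinset_sum _ hfin,
    finsum_mem_eq_finite_toFinset_sum _ hfin]
  refine (norm_sum_le _ _).trans (Finset.sum_le_sum fun g _ => ?_)
  rw [Complex.norm_cpow_eq_rpow_re_of_pos (one_pos.trans_le (one_le_gnorm hq g)), Complex.neg_re]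

theorem zetaXR_le_integral_add {θ A κ σ : ℝ} (hq : ∀ i, 1 < q i)
    (hdisc : ∀ x : ℝ, {g : ι →₀ ℕ | gnorm q g ≤ x}.Finite) (hθ : 0 ≤ θ) (hA : 0 ≤ A)
    (hN : ∀ x : ℝ, 1 ≤ x → (Ncount q x : ℝ) ≤ κ * (x - 1) + A * x ^ θ)
    (hX : 1 ≤ X) (hσ : θ < σ) :
    zetaXR q X σ ≤ κ * (∫ u in (1 : ℝ)..X, u ^ (-σ)) + σ * A / (σ - θ) := by
  have hσθ : 0 < σ - θ := by linarith
  have h0 : (0 : ℝ) ∉ Set.uIcc 1 X := Set.notMem_uIcc_of_lt one_pos (by linarith)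
  have hpos : ∀ u ∈ Set.Icc 1 X, 0 < u := fun u hu => one_pos.trans_le hu.1
  have hcount : ∀ u ∈ Set.Icc 1 X,
      (#{g ∈ (hdisc X).toFinset | gnorm q g ≤ u} : ℝ) ≤ κ * (u - 1) + A * u ^ θ := by
    intro u hu
    refine le_trans ?_ (hN u hu.1)
    rw [Ncount_eq_card_toFinset (hdisc u), Nat.cast_le]
    exact Finset.card_le_card fun g hg => by simp_all
  -- `B 1 = A`, and the `A`-part of `∫ B' u u^{-σ}` is `A θ ∫ u^{θ-σ-1} ≤ A θ / (σ - θ)`.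
  have habel := (hdisc X).toFinset.sum_comp_le_of_card_filter_le (gnorm q) hX
    (f := fun u => u ^ (-σ)) (f' := fun u => -σ * u ^ (-σ - 1))
    (B := fun u => κ * (u - 1) + A * u ^ θ) (B' := fun u => κ * 1 + A * (θ * u ^ (θ - 1)))
    (fun g hg => ⟨one_le_gnorm hq g, by simpa using hg⟩)
    (fun u hu => Real.hasDerivAt_rpow_const (Or.inl (hpos u hu).ne'))
    ((intervalIntegrable_rpow (Or.inr h0)).const_mul _)
    (fun u hu => by have := Real.rpow_nonneg (hpos u hu).le (-σ - 1); nlinarith)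
    (Real.rpow_nonneg (by linarith) _)
    (fun u hu => (((hasDerivAt_id u).sub_const 1).const_mul κ).add
      ((Real.hasDerivAt_rpow_const (Or.inl (hpos u hu).ne')).const_mul A))
    (intervalIntegrable_const.add
      (((intervalIntegrable_rpow (Or.inr h0)).const_mul _).const_mul _)) hcount
  have hsplit : ∫ u in (1 : ℝ)..X, (κ * 1 + A * (θ * u ^ (θ - 1))) * u ^ (-σ) =
      κ * (∫ u in (1 : ℝ)..X, u ^ (-σ)) + A * θ * (∫ u in (1 : ℝ)..X, u ^ (-(σ - θ + 1))) := by
    rw [← intervalIntegral.integral_const_mul, ← intervalIntegral.integral_const_mul,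
      ← intervalIntegral.integral_add ((intervalIntegrable_rpow (Or.inr h0)).const_mul _)
        ((intervalIntegrable_rpow (Or.inr h0)).const_mul _)]
    refine integral_congr fun u hu => ?_
    rw [Set.uIcc_of_le hX] at hu
    rw [show -(σ - θ + 1) = (θ - 1) + -σ by ring, Real.rpow_add (hpos u hu)]
    ring
  have htail : ∫ u in (1 : ℝ)..X, u ^ (-(σ - θ + 1)) ≤ 1 / (σ - θ) :=
    (integral_rpow_neg_le_of_one_lt (by linarith) hX).trans_eq (by ring_nf)
  rw [zetaXR, finsum_mem_eq_finite_toFinset_sum _ (hdisc X)]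
  calc _ ≤ _ := habel
    _ = A + (κ * (∫ u in (1 : ℝ)..X, u ^ (-σ)) +
          A * θ * (∫ u in (1 : ℝ)..X, u ^ (-(σ - θ + 1)))) := by
      rw [hsplit]; simp
    _ ≤ A + (κ * (∫ u in (1 : ℝ)..X, u ^ (-σ)) + A * θ * (1 / (σ - θ))) := by gcongr
    _ = κ * (∫ u in (1 : ℝ)..X, u ^ (-σ)) + σ * A / (σ - θ) := by
      field_simp
      ring

end Beurling

theorem beurling_partial_zeta_bounds_general
    {ι : Type*} (q : ι → ℝ) (θ A κ : ℝ)
    (hq : ∀ i, 1 < q i)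
    (hdisc : ∀ x : ℝ, {g : ι →₀ ℕ | gnorm q g ≤ x}.Finite)
    (hθ0 : 0 < θ) (hθ1 : θ < 1) (hA : 0 < A) (hκ : 0 < κ)
    (hAx : ∀ x : ℝ, 1 ≤ x → |(Ncount q x : ℝ) - κ * (x - 1)| ≤ A * x ^ θ)
    (X : ℝ) (hX : 1 ≤ X) (s : ℂ) (hs : θ < s.re) :
    ‖zetaX q X s‖ ≤ zetaXR q X s.re ∧
    (s.re < 1 →
      zetaXR q X s.re ≤
        min (κ * X ^ (1 - s.re) / (1 - s.re) + A / (s.re - θ))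
          (κ * X ^ (1 - s.re) * Real.log X + A / (s.re - θ))) ∧
    (s.re = 1 → zetaXR q X 1 ≤ κ * Real.log X + A / (1 - θ)) ∧
    (1 < s.re →
      zetaXR q X s.re ≤
        min (s.re * (A + κ) / (s.re - 1))
          (κ * Real.log X + s.re * A / (s.re - θ))) := by
  have hN (x : ℝ) (hx : 1 ≤ x) : (Ncount q x : ℝ) ≤ κ * (x - 1) + A * x ^ θ := by
    linarith [(abs_le.mp (hAx x hx)).2]
  have hζ := zetaXR_le_integral_add hq hdisc hθ0.le hA.le hN hX hs
  have hσθ : 0 < s.re - θ := by linarith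
  refine ⟨norm_zetaX_le_zetaXR hq (hdisc X) s, fun hσ => le_min ?_ ?_, fun hσ => ?_,
    fun hσ => le_min ?_ ?_⟩
  · have hA' : s.re * A / (s.re - θ) ≤ A / (s.re - θ) := by gcongr; nlinarith
    rw [mul_div_assoc]
    linarith [mul_le_mul_of_nonneg_left (integral_rpow_neg_le_of_lt_one hσ X) hκ.le]
  · have hA' : s.re * A / (s.re - θ) ≤ A / (s.re - θ) := by gcongr; nlinarith
    rw [mul_assoc]
    linarith [mul_le_mul_of_nonneg_left (integral_rpow_neg_le_rpow_mul_log hσ.le hX) hκ.le]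
  · rw [hσ, one_mul] at hζ
    linarith [mul_le_mul_of_nonneg_left (integral_rpow_neg_le_log le_rfl hX) hκ.le]
  · have hA' : s.re * A / (s.re - θ) ≤ s.re * A / (s.re - 1) := by gcongr
    have hκ' : κ * (1 / (s.re - 1)) ≤ s.re * κ / (s.re - 1) := by
      rw [mul_one_div]; gcongr; nlinarith
    rw [mul_add, add_div]
    linarith [mul_le_mul_of_nonneg_left (integral_rpow_neg_le_of_one_lt hσ hX) hκ.le]
  · linarith [mul_le_mul_of_nonneg_left (integral_rpow_neg_le_log hσ.le hX) hκ.le]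

theorem beurling_partial_zeta_bounds
    {ι : Type*} [Countable ι] (q : ι → ℝ) (θ A κ : ℝ)
    (hq : ∀ i, 1 < q i)
    (hdisc : ∀ x : ℝ, {g : ι →₀ ℕ | gnorm q g ≤ x}.Finite)
    (hθ0 : 0 < θ) (hθ1 : θ < 1) (hA : 0 < A) (hκ : 0 < κ)
    (hAx : ∀ x : ℝ, 1 ≤ x → |(Ncount q x : ℝ) - κ * (x - 1)| ≤ A * x ^ θ)
    (X : ℝ) (hX : 1 ≤ X) (s : ℂ) (hs : θ < s.re) :
    ‖zetaX q X s‖ ≤ zetaXR q X s.re ∧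
    (s.re < 1 →
      zetaXR q X s.re ≤
        min (κ * X ^ (1 - s.re) / (1 - s.re) + A / (s.re - θ))
          (κ * X ^ (1 - s.re) * Real.log X + A / (s.re - θ))) ∧
    (s.re = 1 → zetaXR q X 1 ≤ κ * Real.log X + A / (1 - θ)) ∧
    (1 < s.re →
      zetaXR q X s.re ≤
        min (s.re * (A + κ) / (s.re - 1))
          (κ * Real.log X + s.re * A / (s.re - θ))) :=
  beurling_partial_zeta_bounds_general q θ A κ hq hdisc hθ0 hθ1 hA hκ hAx X hX s hs
end

section
/- If s ≠ 1 satisfies |s − 1| ≤ κ(1−θ)/(A+κ), then ζ(s) ≠ 0. (Note κ(1−θ)/(A+κ) < 1−θ, so such s automatically satisfies Re s > θ.) -/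
open MeasureTheory Complex Filter

/-!
If `ζ(s) = 0`, the integral representation gives `κ = |s - 1| |s| |I(s)|`, and Axiom A bounds
the Mellin integral by `|I(s)| ≤ A / (Re s - θ)`. The crude bound `|s| ≤ 1 + |s - 1|` is too weak
on the whole disc; the sharper `|s| ≤ Re s + |s - 1|² / 2` gains exactly the room needed to get
`|s - 1| |s| A < κ (Re s - θ)` whenever `|s - 1| ≤ κ (1 - θ) / (A + κ)`, a contradiction.
-/

lemma norm_setIntegral_Ioi_one_mul_cpow_le {f : ℝ → ℂ} {θ A : ℝ} {s : ℂ} (hθs : θ < s.re)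
    (hf : ∀ x : ℝ, 1 ≤ x → ‖f x‖ ≤ A * x ^ θ) :
    ‖∫ x in Set.Ioi (1 : ℝ), f x * (x : ℂ) ^ (-s - 1)‖ ≤ A / (s.re - θ) := by
  have hexp : θ - s.re - 1 < -1 := by linarith
  have hmajor : ∀ x ∈ Set.Ioi (1 : ℝ), ‖f x * (x : ℂ) ^ (-s - 1)‖ ≤ A * x ^ (θ - s.re - 1) := by
    intro x (hx : 1 < x)
    have hx0 : 0 < x := by linarith
    calc ‖f x * (x : ℂ) ^ (-s - 1)‖ = ‖f x‖ * x ^ (-s.re - 1) := by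
          simp [norm_cpow_eq_rpow_re_of_pos hx0]
      _ ≤ A * x ^ θ * x ^ (-s.re - 1) := by gcongr; exact hf x hx.le
      _ = A * x ^ (θ - s.re - 1) := by
          rw [mul_assoc, ← Real.rpow_add hx0]; ring_nf
  calc _ ≤ ∫ x in Set.Ioi (1 : ℝ), A * x ^ (θ - s.re - 1) :=
        norm_integral_le_of_norm_le ((integrableOn_Ioi_rpow_of_lt hexp zero_lt_one).const_mul A)
          ((ae_restrict_iff' measurableSet_Ioi).mpr (.of_forall hmajor))
    _ = A / (s.re - θ) := by
        rw [integral_const_mul, integral_Ioi_rpow_of_lt hexp zero_lt_one, Real.one_rpow,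
          show θ - s.re - 1 + 1 = -(s.re - θ) by ring]
        field_simp

lemma norm_one_add_le (z : ℂ) : ‖1 + z‖ ≤ 1 + z.re + ‖z‖ ^ 2 / 2 := by
  -- AM-GM: `‖1 + z‖ ≤ (1 + ‖1 + z‖²) / 2`
  have hsq : ‖1 + z‖ ^ 2 = 1 + 2 * z.re + ‖z‖ ^ 2 := by
    simp only [Complex.sq_norm, normSq_apply, add_re, add_im, one_re, one_im]; ring
  nlinarith [sq_nonneg (‖1 + z‖ - 1)]

lemma div_add_ne_zero_of_norm_mul_lt {a b z : ℂ} (hz : z ≠ 0) (h : ‖z‖ * ‖b‖ < ‖a‖) :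
    a / z + b ≠ 0 := by
  intro h0
  have ha : a = -(b * z) := by
    field_simp at h0; linear_combination h0
  rw [ha, norm_neg, norm_mul, mul_comm] at h
  exact lt_irrefl _ h

lemma norm_sub_one_mul_norm_mul_lt {θ A κ : ℝ} {s : ℂ} (hθ0 : 0 < θ) (hθ1 : θ < 1)
    (hA : 0 < A) (hκ : 0 < κ) (hclose : ‖s - 1‖ ≤ κ * (1 - θ) / (A + κ)) :
    ‖s - 1‖ * ‖s‖ * A < κ * (s.re - θ) := by
  set r := κ * (1 - θ) / (A + κ)
  have hr : r * (A + κ) = κ * (1 - θ) := div_mul_cancel₀ _ (by positivity)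
  have hr0 : 0 < r := by positivity
  have hrA : r * A < κ := by nlinarith
  have hr1 : r < 1 := by nlinarith
  have hu : -‖s - 1‖ ≤ s.re - 1 := by
    simpa using neg_le_of_abs_le (abs_re_le_norm (s - 1))
  have hs : ‖s‖ ≤ 1 + (s.re - 1) + ‖s - 1‖ ^ 2 / 2 := by
    simpa using norm_one_add_le (s - 1)
  calc ‖s - 1‖ * ‖s‖ * A ≤ r * (1 + (s.re - 1) + r ^ 2 / 2) * A := by
        gcongr
        calc ‖s‖ ≤ _ := hs
          _ ≤ _ := by gcongr
    _ < r * (A + κ) + κ * (s.re - 1) := by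
        nlinarith [mul_nonneg (sub_nonneg.mpr hrA.le) (show 0 ≤ s.re - 1 + r by linarith),
          mul_pos (mul_pos (pow_pos hr0 2) hA) (show 0 < 2 - r by linarith)]
    _ = κ * (s.re - θ) := by rw [hr]; ring

theorem beurling_zeta_nonzero_near_pole_general
    {ι : Type*} (q : ι → ℝ) (θ A κ : ℝ) (ζ : ℂ → ℂ)
    (hθ0 : 0 < θ) (hθ1 : θ < 1) (hA : 0 < A) (hκ : 0 < κ)
    (hAx : ∀ x : ℝ, 1 ≤ x → |(Ncount q x : ℝ) - κ * (x - 1)| ≤ A * x ^ θ)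
    (hζ : ∀ s : ℂ, θ < s.re → s ≠ 1 →
      ζ s = (κ : ℂ) / (s - 1) +
        s * ∫ x in Set.Ioi (1 : ℝ),
          (((Ncount q x : ℝ) - κ * (x - 1) : ℝ) : ℂ) * (x : ℂ) ^ (-s - 1))
    (s : ℂ) (hs1 : s ≠ 1)
    (hclose : ‖s - 1‖ ≤ κ * (1 - θ) / (A + κ)) :
    ζ s ≠ 0 := by
  have hθs : θ < s.re := by
    have hr : κ * (1 - θ) / (A + κ) < 1 - θ := by
      rw [div_lt_iff₀ (by positivity)]; nlinarith
    linarith [neg_abs_le (s - 1).re, abs_re_le_norm (s - 1), sub_re s 1, one_re]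
  have hI := norm_setIntegral_Ioi_one_mul_cpow_le hθs (fun x hx => by
    rw [norm_real, Real.norm_eq_abs]; exact hAx x hx)
  rw [hζ s hθs hs1]
  refine div_add_ne_zero_of_norm_mul_lt (sub_ne_zero.mpr hs1) ?_
  rw [norm_mul, norm_real, Real.norm_of_nonneg hκ.le]
  calc ‖s - 1‖ * (‖s‖ * ‖_‖) ≤ ‖s - 1‖ * ‖s‖ * A / (s.re - θ) := by
        rw [← mul_assoc, mul_div_assoc]; gcongr
    _ < κ := by
        rw [div_lt_iff₀ (by linarith)]
        exact norm_sub_one_mul_norm_mul_lt hθ0 hθ1 hA hκ hclose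

theorem beurling_zeta_nonzero_near_pole
    {ι : Type*} [Countable ι] (q : ι → ℝ) (θ A κ : ℝ) (ζ : ℂ → ℂ)
    (hq : ∀ i, 1 < q i)
    (hdisc : ∀ x : ℝ, {g : ι →₀ ℕ | gnorm q g ≤ x}.Finite)
    (hθ0 : 0 < θ) (hθ1 : θ < 1) (hA : 0 < A) (hκ : 0 < κ)
    (hAx : ∀ x : ℝ, 1 ≤ x → |(Ncount q x : ℝ) - κ * (x - 1)| ≤ A * x ^ θ)
    (hint : ∀ s : ℂ, θ < s.re →
      MeasureTheory.IntegrableOn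
        (fun x : ℝ => (((Ncount q x : ℝ) - κ * (x - 1) : ℝ) : ℂ) * (x : ℂ) ^ (-s - 1))
        (Set.Ioi 1))
    (hζ : ∀ s : ℂ, θ < s.re → s ≠ 1 →
      ζ s = (κ : ℂ) / (s - 1) +
        s * ∫ x in Set.Ioi (1 : ℝ),
          (((Ncount q x : ℝ) - κ * (x - 1) : ℝ) : ℂ) * (x : ℂ) ^ (-s - 1))
    (hζdiff : DifferentiableOn ℂ ζ {s : ℂ | θ < s.re ∧ s ≠ 1})
    (hζsum : ∀ s : ℂ, 1 < s.re → ζ s = ∑' g : ι →₀ ℕ, (gnorm q g : ℂ) ^ (-s))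
    (s : ℂ) (hs1 : s ≠ 1)
    (hclose : ‖s - 1‖ ≤ κ * (1 - θ) / (A + κ)) :
    ζ s ≠ 0 :=
  beurling_zeta_nonzero_near_pole_general q θ A κ ζ hθ0 hθ1 hA hκ hAx hζ s hs1 hclose
end
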